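/- If β > 1/2, then for any constant C > ⌈(2β+1)/(2β−1)⌉² and all sufficiently large n, f_β(n) ≤ C·ln n. -/

import Mathlib

/-!
Fix `K ≥ 2` with `1/2 + 1/(K-1) ≤ β`; `K = ⌈(2β+1)/(2β-1)⌉` is such a `K`. Cut a sequence of
length `n ≥ K²` into `K²` blocks of length `h = ⌊n/K²⌋`. If no two adjacent runs of `g < K` blocks
form a β-repeat, averaging over the runs shows that the blocks at distance `g` disagree in at least
about `βh(K² - 2g)` positions. But in every column of the `K² × h` block array, the mismatches
weighted by `(K - |a - b|)₊` make up at most half the total weight, because this kernel is positive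
semidefinite. For `β ≥ 1/2 + 1/(K-1)` the two bounds contradict each other, so some
deduplication removes at least `h` symbols. Each step then shrinks the length by a factor close to
`1 - 1/K²`, so `K² log n + O(1)` deduplications suffice, with room for any constant above `K²`.
-/

/-- A binary sequence is square-free if it contains no nonempty factor of the form `b ++ b`. -/
def SqFree (s : List Bool) : Prop :=
  ¬ ∃ a b c : List Bool, b ≠ [] ∧ s = a ++ (b ++ b) ++ c

/-- Hamming distance between two binary lists (of the same length). -/
def hdist (x y : List Bool) : ℕ := (List.zip x y).countP (fun p => p.1 != p.2)

/-- A `β`-deduplication: replace a substring `v ++ v'` consisting of two adjacent blocks of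
the same length at Hamming distance at most `β·|v|` by `v` or by `v'`. -/
def BDedup (β : ℝ) (x y : List Bool) : Prop :=
  ∃ u v v' w : List Bool, v ≠ [] ∧ v.length = v'.length ∧
    (hdist v v' : ℝ) ≤ β * v.length ∧
    x = u ++ (v ++ v') ++ w ∧ (y = u ++ v ++ w ∨ y = u ++ v' ++ w)

/-- `BDedupSteps β k x y` : `y` is obtained from `x` by exactly `k` β-deduplications. -/
def BDedupSteps (β : ℝ) : ℕ → List Bool → List Bool → Prop
  | 0 => fun x y => x = y
  | k + 1 => fun x y => ∃ z, BDedup β x z ∧ BDedupSteps β k z y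

/-- β-approximate duplication distance: the least number of β-deduplications turning `s`
into a square-free sequence. -/
noncomputable def bdist (β : ℝ) (s : List Bool) : ℕ :=
  sInf {k | ∃ r : List Bool, SqFree r ∧ BDedupSteps β k s r}

/-- Maximum β-approximate duplication distance over binary sequences of length `n`. -/
noncomputable def bfmax (β : ℝ) (n : ℕ) : ℕ :=
  sSup (bdist β '' {s : List Bool | s.length = n})

open Finset

def windowDist (x : ℕ → Bool) (p q L : ℕ) : ℕ :=
  ∑ τ ∈ range L, if x (p + τ) = x (q + τ) then 0 else 1

section windowDist

variable (x : ℕ → Bool)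

@[simp]
lemma windowDist_self (p L : ℕ) : windowDist x p p L = 0 := by simp [windowDist]

lemma windowDist_comm (p q L : ℕ) : windowDist x p q L = windowDist x q p L := by
  simp only [windowDist, eq_comm]

lemma windowDist_add (p q L L' : ℕ) :
    windowDist x p q (L + L') = windowDist x p q L + windowDist x (p + L) (q + L) L' := by
  simp only [windowDist, sum_range_add, add_assoc]

lemma windowDist_mul (p q g h : ℕ) :
    windowDist x p q (g * h) = ∑ t ∈ range g, windowDist x (p + t * h) (q + t * h) h := by
  induction g with
  | zero => simp [windowDist]
  | succ g ih => rw [add_mul, one_mul, windowDist_add, ih, sum_range_succ]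

lemma windowDist_blocks (i g h : ℕ) :
    windowDist x (i * h) ((i + g) * h) (g * h) =
      ∑ t ∈ range g, windowDist x ((i + t) * h) ((i + t + g) * h) h := by
  rw [windowDist_mul]
  exact sum_congr rfl fun t _ => by congr 1 <;> ring

end windowDist

lemma hdist_cons (a b : Bool) (x y : List Bool) :
    hdist (a :: x) (b :: y) = (if a = b then 0 else 1) + hdist x y := by
  cases a <;> cases b <;> simp [hdist, add_comm]

lemma hdist_eq_sum : ∀ {x y : List Bool}, x.length = y.length →
    hdist x y = ∑ i ∈ range x.length, if x.getD i false = y.getD i false then 0 else 1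
  | [], _, _ => by simp [hdist]
  | _ :: _, [], h => by simp at h
  | a :: x, b :: y, h => by
    rw [hdist_cons, hdist_eq_sum (Nat.succ.inj h), List.length_cons, sum_range_succ', add_comm]
    simp

lemma hdist_self (b : List Bool) : hdist b b = 0 := by simp [hdist_eq_sum rfl]

lemma hdist_take_drop (s : List Bool) {p q L : ℕ} (hp : p + L ≤ s.length) (hq : q + L ≤ s.length) :
    hdist ((s.drop p).take L) ((s.drop q).take L) = windowDist (s.getD · false) p q L := by
  have hlen : ((s.drop p).take L).length = L := by simp; omega
  rw [hdist_eq_sum (by simp; omega), hlen, windowDist]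
  exact sum_congr rfl fun τ hτ => by simp [List.getD_eq_getElem?_getD, mem_range.mp hτ]

lemma exists_bdedup_of_windowDist_le {β : ℝ} {s : List Bool} {p L : ℕ} (hL : 0 < L)
    (hs : p + 2 * L ≤ s.length) (hd : (windowDist (s.getD · false) p (p + L) L : ℝ) ≤ β * L) :
    ∃ y, BDedup β s y ∧ y.length + L = s.length := by
  set r := s.drop p
  refine ⟨s.take p ++ r.take L ++ (r.drop L).drop L,
    ⟨s.take p, r.take L, (r.drop L).take L, (r.drop L).drop L, ?_, ?_, ?_, ?_, Or.inl rfl⟩, ?_⟩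
  · simp [r]; omega
  · simp [r]; omega
  · rw [List.drop_drop, hdist_take_drop s (by omega) (by omega)]
    simpa [r, show min L (s.length - p) = L by omega] using hd
  · simp only [List.append_assoc, List.take_append_drop, r]
  · simp [r]; omega

lemma card_filter_window_overlap {N M a b : ℕ} (ha : a + N ≤ M) (hb : b + N ≤ M) :
    #{j ∈ range M | (a ≤ j ∧ j < a + N) ∧ (b ≤ j ∧ j < b + N)} = N - Nat.dist a b := by
  rw [show {j ∈ range M | (a ≤ j ∧ j < a + N) ∧ (b ≤ j ∧ j < b + N)}
      = Ico (max a b) (min (a + N) (b + N)) by ext j; simp; omega, Nat.card_Ico]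
  unfold Nat.dist
  omega

-- `(N - |a - b|)₊` counts the `j` with `a, b ∈ (j - N, j]`, so the form is a sum over `j` of
-- squared window sums.
lemma tent_quadratic_form_nonneg (σ : ℕ → ℤ) (N m : ℕ) :
    0 ≤ ∑ a ∈ range m, ∑ b ∈ range m, ((N - Nat.dist a b : ℕ) : ℤ) * (σ a * σ b) := by
  have hgram : ∀ a ∈ range m, ∀ b ∈ range m, ((N - Nat.dist a b : ℕ) : ℤ) * (σ a * σ b) =
      ∑ j ∈ range (m + N), (if a ≤ j ∧ j < a + N then σ a else 0) *
        (if b ≤ j ∧ j < b + N then σ b else 0) := by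
    intro a ha b hb
    rw [mem_range] at ha hb
    rw [← card_filter_window_overlap (M := m + N) (by omega) (by omega), natCast_card_filter,
      sum_mul]
    refine sum_congr rfl fun j _ => ?_
    split_ifs <;> simp_all
  calc 0 ≤ ∑ j ∈ range (m + N), (∑ a ∈ range m, if a ≤ j ∧ j < a + N then σ a else 0) ^ 2 :=
        sum_nonneg fun _ _ => sq_nonneg _
    _ = _ := by
      rw [sum_congr rfl fun a ha => sum_congr rfl fun b hb => hgram a ha b hb]
      simp_rw [sq, sum_mul_sum]
      rw [sum_comm]
      exact sum_congr rfl fun a _ => sum_comm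

lemma two_mul_sum_tent_mismatch_le (y : ℕ → Bool) (N m : ℕ) :
    2 * ∑ a ∈ range m, ∑ b ∈ range m, (N - Nat.dist a b) * (if y a = y b then 0 else 1)
      ≤ ∑ a ∈ range m, ∑ b ∈ range m, (N - Nat.dist a b) := by
  have hσ : ∀ a b, ((if y a then 1 else -1) * (if y b then 1 else -1) : ℤ) =
      1 - 2 * (if y a = y b then 0 else 1) := by
    intro a b; cases y a <;> cases y b <;> norm_num
  have := tent_quadratic_form_nonneg (fun a => if y a then 1 else -1) N m
  simp only [hσ, mul_sub, mul_one, sum_sub_distrib, mul_left_comm _ (2 : ℤ), ← mul_sum] at this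
  zify
  linarith

lemma sum_sum_add_sum_diag_eq_sum_gaps {M : Type*} [AddCommMonoid M] (F : ℕ → ℕ → M) (m : ℕ) :
    ∑ a ∈ range m, ∑ b ∈ range m, F a b + ∑ a ∈ range m, F a a =
      ∑ g ∈ range m, ∑ a ∈ range (m - g), (F a (a + g) + F (a + g) a) := by
  induction m with
  | zero => simp
  | succ m ih =>
    have hrow : ∀ g ∈ range (m + 1), ∑ a ∈ range (m + 1 - g), (F a (a + g) + F (a + g) a) =
        ∑ a ∈ range (m - g), (F a (a + g) + F (a + g) a) + (F (m - g) m + F m (m - g)) := by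
      intro g hg
      rw [mem_range] at hg
      rw [show m + 1 - g = m - g + 1 by omega, sum_range_succ, show m - g + g = m by omega]
    have hrefl := sum_range_reflect (fun a => F a m + F m a) (m + 1)
    simp only [add_tsub_cancel_right] at hrefl
    rw [sum_congr rfl hrow, sum_add_distrib, hrefl,
      sum_range_succ (fun g => ∑ a ∈ range (m - g), (F a (a + g) + F (a + g) a)) m, Nat.sub_self,
      range_zero, sum_empty, add_zero, ← ih]
    simp only [sum_range_succ, sum_add_distrib]
    abel

def gapDist (x : ℕ → Bool) (h m g : ℕ) : ℕ :=
  ∑ a ∈ range (m - g), windowDist x (a * h) ((a + g) * h) h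

@[simp]
lemma gapDist_zero (x : ℕ → Bool) (h m : ℕ) : gapDist x h m 0 = 0 := by simp [gapDist]

lemma four_mul_sum_tent_gapDist_add_le (x : ℕ → Bool) (h N m : ℕ) :
    4 * ∑ g ∈ range m, (N - g) * gapDist x h m g + h * (m * N) ≤
      2 * h * ∑ g ∈ range m, (N - g) * (m - g) := by
  have hcols := sum_le_sum fun c (_ : c ∈ range h) =>
    two_mul_sum_tent_mismatch_le (fun a => x (a * h + c)) N m
  rw [← mul_sum, sum_const, card_range, smul_eq_mul, sum_comm] at hcols
  simp_rw [sum_comm (s := range h), ← mul_sum] at hcols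
  have hdist : ∀ a g, Nat.dist a (a + g) = g ∧ Nat.dist (a + g) a = g := fun a g =>
    ⟨by simp [Nat.dist_eq_sub_of_le], by simp [Nat.dist_eq_sub_of_le_right]⟩
  have hE := sum_sum_add_sum_diag_eq_sum_gaps
    (fun a b => (N - Nat.dist a b) * windowDist x (a * h) (b * h) h) m
  have hκ := sum_sum_add_sum_diag_eq_sum_gaps (fun a b => N - Nat.dist a b) m
  simp only [Nat.dist_self, windowDist_self, mul_zero, sum_const_zero, add_zero, tsub_zero,
    sum_const, card_range, smul_eq_mul, (hdist _ _).1, (hdist _ _).2,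
    windowDist_comm x ((_ + _) * h), ← two_mul, ← mul_sum] at hE hκ
  calc 4 * ∑ g ∈ range m, (N - g) * gapDist x h m g + h * (m * N)
      = 2 * ∑ a ∈ range m, ∑ b ∈ range m, (N - Nat.dist a b) * windowDist x (a * h) (b * h) h
        + h * (m * N) := by rw [hE]; unfold gapDist; ring
    _ ≤ h * ∑ a ∈ range m, ∑ b ∈ range m, (N - Nat.dist a b) + h * (m * N) := by
      gcongr ?_ + _; exact hcols
    _ = 2 * h * ∑ g ∈ range m, (N - g) * (m - g) := by
      rw [← mul_add, hκ, mul_assoc, mul_sum, mul_sum, mul_sum]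
      simp only [mul_left_comm _ 2, mul_comm (m - _)]

lemma sum_range_sum_window_le (f : ℕ → ℕ) (n g : ℕ) :
    ∑ i ∈ range n, ∑ t ∈ range g, f (i + t) ≤ g * ∑ a ∈ range (n + g - 1), f a := by
  rw [sum_comm]
  calc ∑ t ∈ range g, ∑ i ∈ range n, f (i + t) ≤ ∑ t ∈ range g, ∑ a ∈ range (n + g - 1), f a := by
        refine sum_le_sum fun t ht => ?_
        refine (sum_map (range n) (addRightEmbedding t) f).symm.trans_le
          (sum_le_sum_of_subset fun a ha => ?_)
        simp only [mem_map, mem_range, addRightEmbedding_apply] at ha ht ⊢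
        omega
    _ = g * ∑ a ∈ range (n + g - 1), f a := by simp

lemma le_gapDist_of_forall_le_windowDist {β : ℝ} {x : ℕ → Bool} {h m g : ℕ}
    (hg : 0 < g) (hgm : 2 * g ≤ m)
    (hwin : ∀ i, i + 2 * g ≤ m → β * (g * h : ℕ) ≤ windowDist x (i * h) ((i + g) * h) (g * h)) :
    ((m - 2 * g + 1 : ℕ) : ℝ) * β * h ≤ gapDist x h m g := by
  have hsum := sum_range_sum_window_le (fun a => windowDist x (a * h) ((a + g) * h) h)
    (m - 2 * g + 1) g
  rw [show m - 2 * g + 1 + g - 1 = m - g by omega] at hsum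
  simp only [← windowDist_blocks] at hsum
  have hlow : ((m - 2 * g + 1 : ℕ) : ℝ) * (β * (g * h : ℕ)) ≤
      ∑ i ∈ range (m - 2 * g + 1), (windowDist x (i * h) ((i + g) * h) (g * h) : ℝ) := by
    simpa using card_nsmul_le_sum (range (m - 2 * g + 1))
      (fun i => (windowDist x (i * h) ((i + g) * h) (g * h) : ℝ)) _
      fun i hi => hwin i (by rw [mem_range] at hi; omega)
  have hg' : (0 : ℝ) < g := by exact_mod_cast hg
  rw [← mul_le_mul_iff_of_pos_left hg']
  calc (g : ℝ) * (((m - 2 * g + 1 : ℕ) : ℝ) * β * h)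
      = ((m - 2 * g + 1 : ℕ) : ℝ) * (β * (g * h : ℕ)) := by push_cast; ring
    _ ≤ _ := hlow
    _ ≤ _ := by exact_mod_cast hsum

lemma two_mul_sum_range_natCast {R : Type*} [CommRing R] (K : ℕ) :
    2 * ∑ g ∈ range K, (g : R) = K * (K - 1) := by
  induction K with
  | zero => simp
  | succ K ih => rw [sum_range_succ]; push_cast; linear_combination ih

lemma two_mul_sum_range_sub {R : Type*} [CommRing R] (K : ℕ) :
    2 * ∑ g ∈ range K, ((K : R) - g) = K * (K + 1) := by
  rw [sum_sub_distrib, mul_sub, two_mul_sum_range_natCast]; simp; ring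

lemma six_mul_sum_range_sub_mul {R : Type*} [CommRing R] (K : ℕ) :
    6 * ∑ g ∈ range K, ((K : R) - g) * g = K ^ 3 - K := by
  induction K with
  | zero => simp
  | succ K ih =>
    simp only [sum_range_succ, Nat.cast_add, Nat.cast_one, add_sub_right_comm, add_mul, one_mul,
      sum_add_distrib]
    linear_combination ih + 3 * two_mul_sum_range_natCast (R := R) K

lemma tent_weighted_gap_lt {K : ℕ} (hK : 2 ≤ K) {β : ℝ} (hβK : 1 / 2 + 1 / ((K : ℝ) - 1) ≤ β) :
    2 * ∑ g ∈ range K, ((K : ℝ) - g) * ((K : ℝ) ^ 2 - g) <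
      K ^ 3 + 4 * β * ∑ g ∈ Ico 1 K, ((K : ℝ) - g) * ((K : ℝ) ^ 2 - 2 * g + 1) := by
  have hK' : (2 : ℝ) ≤ K := by exact_mod_cast hK
  have hP : ∑ g ∈ range K, ((K : ℝ) - g) * ((K : ℝ) ^ 2 - g) =
      K ^ 2 * ∑ g ∈ range K, ((K : ℝ) - g) - ∑ g ∈ range K, ((K : ℝ) - g) * g := by
    rw [mul_sum, ← sum_sub_distrib]
    exact sum_congr rfl fun g _ => by ring
  have hQ : K * (K ^ 2 + 1) + ∑ g ∈ Ico 1 K, ((K : ℝ) - g) * ((K : ℝ) ^ 2 - 2 * g + 1) =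
      (K ^ 2 + 1) * ∑ g ∈ range K, ((K : ℝ) - g) - 2 * ∑ g ∈ range K, ((K : ℝ) - g) * g := by
    rw [mul_sum, mul_sum, ← sum_sub_distrib, sum_range_eq_add_Ico _ (by omega)]
    simp only [Nat.cast_zero, sub_zero, mul_zero]
    rw [mul_comm]
    exact congrArg _ (sum_congr rfl fun g _ => by ring)
  have hβ' : 2 * (K + 1 : ℝ) ≤ 4 * β * (K - 1) := by
    have h1 : (0 : ℝ) < K - 1 := by linarith
    have := mul_le_mul_of_nonneg_right hβK (by positivity : (0 : ℝ) ≤ 4 * (K - 1))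
    rw [add_mul, div_mul_eq_mul_div, one_mul, div_mul_eq_mul_div, one_mul,
      mul_div_cancel_right₀ _ h1.ne'] at this
    linarith
  have hpos : (0 : ℝ) ≤ K * (3 * K ^ 2 - 2 * K + 1) := by
    have : (0 : ℝ) ≤ 3 * K ^ 2 - 2 * K + 1 := by nlinarith
    positivity
  have hS := two_mul_sum_range_sub (R := ℝ) K
  have hA := six_mul_sum_range_sub_mul (R := ℝ) K
  have hP' : ∑ g ∈ range K, ((K : ℝ) - g) * ((K : ℝ) ^ 2 - g) =
      (K : ℝ) ^ 2 * (K * (K + 1) / 2) - (K ^ 3 - K) / 6 := by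
    linear_combination hP + (K : ℝ) ^ 2 / 2 * hS - hA / 6
  have hQ' : ∑ g ∈ Ico 1 K, ((K : ℝ) - g) * ((K : ℝ) ^ 2 - 2 * g + 1) =
      (K : ℝ) * (K - 1) * (3 * K ^ 2 - 2 * K + 1) / 6 := by
    linear_combination hQ + ((K : ℝ) ^ 2 + 1) / 2 * hS - hA / 3
  rw [hP', hQ']
  nlinarith [mul_le_mul_of_nonneg_right hβ' hpos]

lemma cast_sum_range_tsub_mul {K m : ℕ} (hKm : K ≤ m) (f : ℕ → ℕ) :
    ((∑ g ∈ range m, (K - g) * f g : ℕ) : ℝ) = ∑ g ∈ range K, ((K : ℝ) - g) * f g := by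
  rw [← sum_subset (range_subset_range.2 hKm) fun g _ hg => ?_, Nat.cast_sum]
  · exact sum_congr rfl fun g hg => by rw [Nat.cast_mul, Nat.cast_sub (mem_range.1 hg).le]
  · rw [Nat.sub_eq_zero_of_le (by simpa using hg), zero_mul]

lemma exists_windowDist_le {β : ℝ} {K : ℕ} (hK : 2 ≤ K) (hβK : 1 / 2 + 1 / ((K : ℝ) - 1) ≤ β)
    (x : ℕ → Bool) {h : ℕ} (hh : 0 < h) :
    ∃ i g, 0 < g ∧ i + 2 * g ≤ K ^ 2 ∧
      (windowDist x (i * h) ((i + g) * h) (g * h) : ℝ) ≤ β * (g * h : ℕ) := by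
  by_contra! hno
  have hKm : K ≤ K ^ 2 := Nat.le_self_pow two_ne_zero K
  have hupper : 4 * ∑ g ∈ range K, ((K : ℝ) - g) * gapDist x h (K ^ 2) g + h * K ^ 3 ≤
      2 * h * ∑ g ∈ range K, ((K : ℝ) - g) * ((K : ℝ) ^ 2 - g) := by
    have hc := Nat.cast_le (α := ℝ).2 (four_mul_sum_tent_gapDist_add_le x h K (K ^ 2))
    have hsq : ∑ g ∈ range K, ((K : ℝ) - g) * ((K ^ 2 - g : ℕ) : ℝ) =
        ∑ g ∈ range K, ((K : ℝ) - g) * ((K : ℝ) ^ 2 - g) :=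
      sum_congr rfl fun g hg => by rw [Nat.cast_sub (by simp at hg; omega), Nat.cast_pow]
    push_cast [cast_sum_range_tsub_mul hKm, hsq] at hc
    linarith
  have hlower : β * h * ∑ g ∈ Ico 1 K, ((K : ℝ) - g) * ((K : ℝ) ^ 2 - 2 * g + 1) ≤
      ∑ g ∈ range K, ((K : ℝ) - g) * gapDist x h (K ^ 2) g := by
    rw [sum_range_eq_add_Ico _ (by omega), mul_sum]
    simp only [gapDist_zero, Nat.cast_zero, mul_zero, zero_add]
    refine sum_le_sum fun g hg => ?_
    obtain ⟨hg1, hgK⟩ := mem_Ico.1 hg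
    have hgap := le_gapDist_of_forall_le_windowDist (m := K ^ 2) hg1 (by nlinarith)
      fun i hi => (hno i g hg1 hi).le
    rw [Nat.cast_add, Nat.cast_sub (by nlinarith), Nat.cast_mul, Nat.cast_pow, Nat.cast_one,
      Nat.cast_ofNat] at hgap
    have hKg : (0 : ℝ) ≤ K - g := by
      rw [sub_nonneg]; exact_mod_cast hgK.le
    calc β * h * (((K : ℝ) - g) * ((K : ℝ) ^ 2 - 2 * g + 1))
        = ((K : ℝ) - g) * (((K : ℝ) ^ 2 - 2 * g + 1) * β * h) := by ring
      _ ≤ _ := mul_le_mul_of_nonneg_left hgap hKg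
  have hh' : (0 : ℝ) < h := by exact_mod_cast hh
  nlinarith [mul_lt_mul_of_pos_left (tent_weighted_gap_lt hK hβK) hh']

lemma exists_bdedup_length_add_div_le {β : ℝ} {K : ℕ} (hK : 2 ≤ K)
    (hβK : 1 / 2 + 1 / ((K : ℝ) - 1) ≤ β) {s : List Bool} (hs : K ^ 2 ≤ s.length) :
    ∃ y, BDedup β s y ∧ y.length + s.length / K ^ 2 ≤ s.length := by
  set h := s.length / K ^ 2
  have hh : 0 < h := Nat.div_pos hs (by positivity)
  have hmh : K ^ 2 * h ≤ s.length := Nat.mul_div_le _ _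
  obtain ⟨i, g, hg, hig, hwin⟩ := exists_windowDist_le hK hβK (s.getD · false) hh
  obtain ⟨y, hy, hylen⟩ := exists_bdedup_of_windowDist_le (p := i * h) (L := g * h)
    (Nat.mul_pos hg hh) (by nlinarith) (by rwa [show i * h + g * h = (i + g) * h by ring])
  exact ⟨y, hy, by nlinarith⟩

lemma bdedup_append_square {β : ℝ} (hβ : 0 ≤ β) {b : List Bool} (hb : b ≠ []) (a c : List Bool) :
    BDedup β (a ++ (b ++ b) ++ c) (a ++ b ++ c) :=
  ⟨a, b, b, c, hb, rfl, by rw [hdist_self, Nat.cast_zero]; positivity, rfl, Or.inl rfl⟩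

lemma BDedup.length_pos {β : ℝ} {x y : List Bool} (h : BDedup β x y) : 0 < y.length := by
  obtain ⟨u, v, v', w, hv, hvv', -, -, rfl | rfl⟩ := h <;>
    simp [List.length_pos_iff.2 hv, ← hvv']

lemma exists_sqFree_bdedupSteps {β : ℝ} (hβ : 0 ≤ β) (s : List Bool) :
    ∃ k ≤ s.length, ∃ r, SqFree r ∧ BDedupSteps β k s r := by
  induction hn : s.length using Nat.strong_induction_on generalizing s with
  | _ n ih =>
  by_cases hsf : SqFree s
  · exact ⟨0, by omega, s, hsf, rfl⟩
  obtain ⟨a, b, c, hb, rfl⟩ := not_not.1 hsf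
  have hb' := List.length_pos_iff.2 hb
  obtain ⟨k, hk, r, hr, hsteps⟩ := ih (a ++ b ++ c).length (by simp at hn ⊢; omega) _ rfl
  exact ⟨k + 1, by simp at hk hn ⊢; omega, r, hr, a ++ b ++ c, bdedup_append_square hβ hb a c,
    hsteps⟩

lemma bdist_le_length {β : ℝ} (hβ : 0 ≤ β) (s : List Bool) : bdist β s ≤ s.length := by
  obtain ⟨k, hk, r, hr, hsteps⟩ := exists_sqFree_bdedupSteps hβ s
  exact (Nat.sInf_le ⟨r, hr, hsteps⟩ : bdist β s ≤ k).trans hk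

lemma bdist_le_bdist_add_one {β : ℝ} (hβ : 0 ≤ β) {s y : List Bool} (h : BDedup β s y) :
    bdist β s ≤ bdist β y + 1 := by
  obtain ⟨k, -, r, hr, hsteps⟩ := exists_sqFree_bdedupSteps hβ y
  obtain ⟨r, hr, hsteps⟩ := Nat.sInf_mem (⟨k, r, hr, hsteps⟩ :
    {k | ∃ r, SqFree r ∧ BDedupSteps β k y r}.Nonempty)
  exact Nat.sInf_le ⟨r, hr, y, h, hsteps⟩

lemma exists_bdist_eq_bfmax (β : ℝ) (n : ℕ) :
    ∃ s : List Bool, s.length = n ∧ bdist β s = bfmax β n :=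
  have hne : {s : List Bool | s.length = n}.Nonempty := ⟨List.replicate n false, by simp⟩
  Set.Nonempty.csSup_mem (hne.image _) ((List.finite_length_eq Bool n).image _)

lemma le_add_log_div_log_of_shrink {α : Type*} (f size : α → ℕ) (L : ℕ) {r : ℝ} (hr : 1 < r)
    (hf : ∀ x, f x ≤ size x)
    (hstep : ∀ x, L ≤ size x → ∃ y, 0 < size y ∧ (size y : ℝ) * r ≤ size x ∧ f x ≤ f y + 1)
    (x : α) : (f x : ℝ) ≤ L + Real.log (size x) / Real.log r := by
  have hlogr : 0 < Real.log r := Real.log_pos hr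
  induction hn : size x using Nat.strong_induction_on generalizing x with
  | _ n ih =>
  rcases lt_or_ge n L with hnL | hLn
  · have hfL : (f x : ℝ) ≤ L := by exact_mod_cast (hf x).trans (hn ▸ hnL.le)
    have := div_nonneg (Real.log_natCast_nonneg n) hlogr.le
    linarith
  obtain ⟨y, hy0, hyr, hfy⟩ := hstep x (hn ▸ hLn)
  have hy0' : (0 : ℝ) < size y := by exact_mod_cast hy0
  have hyn : size y < n := by
    have : (size y : ℝ) < n := by rw [← hn]; nlinarith
    exact_mod_cast this
  have hlog : Real.log (size y) + Real.log r ≤ Real.log n := by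
    rw [← Real.log_mul hy0'.ne' (by positivity), ← hn]
    exact Real.log_le_log (by positivity) hyr
  calc (f x : ℝ) ≤ f y + 1 := by exact_mod_cast hfy
    _ ≤ L + Real.log (size y) / Real.log r + 1 := by linarith [ih _ hyn y rfl]
    _ ≤ L + (Real.log n - Real.log r) / Real.log r + 1 := by gcongr; linarith
    _ = L + Real.log n / Real.log r := by field_simp; ring

lemma natCast_mul_div_sub_one_le {k n m : ℕ} {C : ℝ} (hm : 0 < m) (hmC : (m : ℝ) < C)
    (hn : C * m / (C - m) ≤ n) (hk : k + n / m ≤ n) : (k : ℝ) * (C / (C - 1)) ≤ n := by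
  have hm' : (1 : ℝ) ≤ m := by exact_mod_cast hm
  have hCm : 0 < C - m := by linarith
  have hk' : (k : ℝ) + (n / m : ℕ) ≤ n := by exact_mod_cast hk
  have hq : (n : ℝ) < (n / m : ℕ) * m + m := by exact_mod_cast Nat.lt_div_mul_add hm
  rw [div_le_iff₀ hCm] at hn
  have hnq : (n : ℝ) * m ≤ (n / m : ℕ) * C * m := by nlinarith
  have hnq' : (n : ℝ) ≤ (n / m : ℕ) * C := le_of_mul_le_mul_right hnq (by linarith)
  rw [mul_div_assoc', div_le_iff₀ (by linarith)]
  nlinarith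

lemma half_add_one_div_sub_one_le {β K : ℝ} (hβ : 1 / 2 < β) (hK : (2 * β + 1) / (2 * β - 1) ≤ K) :
    1 / 2 + 1 / (K - 1) ≤ β := by
  have hβ' : 0 < 2 * β - 1 := by linarith
  rw [div_le_iff₀ hβ'] at hK
  have hK1 : 0 < K - 1 := by nlinarith
  rw [div_add_div _ _ two_ne_zero hK1.ne', div_le_iff₀ (by positivity)]
  nlinarith

lemma bdist_le_add_log_div_log {β : ℝ} {K : ℕ} (hK : 2 ≤ K) (hβK : 1 / 2 + 1 / ((K : ℝ) - 1) ≤ β)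
    {C : ℝ} (hKC : (K : ℝ) ^ 2 < C) :
    ∃ L : ℕ, ∀ s, (bdist β s : ℝ) ≤ L + Real.log s.length / Real.log (C / (C - 1)) := by
  have hK' : (2 : ℝ) ≤ K := by exact_mod_cast hK
  have hβ : 0 ≤ β := by
    have := one_div_nonneg.2 (by linarith : (0 : ℝ) ≤ K - 1)
    linarith
  have hK4 : (4 : ℝ) ≤ (K : ℝ) ^ 2 := by nlinarith
  refine ⟨max (K ^ 2) ⌈C * (K ^ 2 : ℕ) / (C - (K ^ 2 : ℕ))⌉₊,
    le_add_log_div_log_of_shrink (bdist β) List.length _ ?_ (bdist_le_length hβ) fun s hs => ?_⟩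
  · rw [one_lt_div (by linarith)]; linarith
  obtain ⟨y, hy, hylen⟩ := exists_bdedup_length_add_div_le hK hβK (le_of_max_le_left hs)
  refine ⟨y, hy.length_pos, natCast_mul_div_sub_one_le (by positivity) (by exact_mod_cast hKC)
    ((Nat.le_ceil _).trans (by exact_mod_cast le_of_max_le_right hs)) hylen,
    bdist_le_bdist_add_one hβ hy⟩

lemma one_div_log_div_sub_one_lt {C : ℝ} (hC : 1 < C) : 1 / Real.log (C / (C - 1)) < C := by
  have hlog : 1 / C < Real.log (C / (C - 1)) := by
    have := Real.log_lt_sub_one_of_pos (x := (C - 1) / C) (by positivity)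
      (by rw [Ne, div_eq_one_iff_eq (by linarith)]; linarith)
    have e : (C - 1) / C - 1 = -(1 / C) := by field_simp; ring
    rw [← inv_div (C - 1), Real.log_inv]
    linarith
  exact (one_div_lt ((one_div_pos.2 (by linarith)).trans hlog) (by linarith)).2 hlog

lemma eventually_add_log_div_log_le {r C : ℝ} (hrC : 1 / Real.log r < C) (L : ℝ) :
    ∀ᶠ n : ℕ in Filter.atTop, L + Real.log n / Real.log r ≤ C * Real.log n := by
  filter_upwards [(Real.tendsto_log_atTop.comp tendsto_natCast_atTop_atTop).eventually_ge_atTop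
    (L / (C - 1 / Real.log r))] with n hn
  rw [Function.comp_apply, div_le_iff₀ (sub_pos.2 hrC)] at hn
  rw [div_eq_mul_one_div]
  linarith

theorem approx_dedup_log_above_half (β : ℝ) (hβ : 1 / 2 < β) (C : ℝ)
    (hC : ((⌈(2 * β + 1) / (2 * β - 1)⌉ : ℝ)) ^ 2 < C) :
    ∃ N : ℕ, ∀ n : ℕ, N ≤ n → (bfmax β n : ℝ) ≤ C * Real.log n := by
  set K := ⌈(2 * β + 1) / (2 * β - 1)⌉₊
  have hratio : 1 < (2 * β + 1) / (2 * β - 1) := by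
    rw [one_lt_div (by linarith)]; linarith
  have hK : 2 ≤ K := Nat.lt_ceil.2 (by exact_mod_cast hratio)
  have hKC : (K : ℝ) ^ 2 < C := by
    rwa [← Int.natCast_ceil_eq_ceil (by linarith), Int.cast_natCast] at hC
  obtain ⟨L, hL⟩ := bdist_le_add_log_div_log hK (half_add_one_div_sub_one_le hβ (Nat.le_ceil _)) hKC
  have hC1 : 1 < C := by
    have : (2 : ℝ) ≤ K := by exact_mod_cast hK
    nlinarith
  obtain ⟨N, hN⟩ := Filter.eventually_atTop.1
    (eventually_add_log_div_log_le (one_div_log_div_sub_one_lt hC1) L)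
  refine ⟨N, fun n hn => ?_⟩
  obtain ⟨s, rfl, hs⟩ := exists_bdist_eq_bfmax β n
  exact hs ▸ (hL s).trans (hN _ hn)
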